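/- Let b be a point, W a closed wedge with apex b of angular width 2α (0 < α < 90°), and let a, w be points in W with w ≠ a. Suppose the orthogonal projection of w onto the bisector ray of W is at most as far from b as the projection of a (w is bisector-closer to b than a). Then the angle ∠ b w a (the interior angle of the triangle at w, i.e., the angle between vectors b − w and a − w) is at least 90° − α. -/

import Mathlib

open Real

noncomputable section

/-- Euclidean dot product of two plane vectors (represented as complex numbers). -/
def dot2 (u v : ℂ) : ℝ := u.re * v.re + u.im * v.im

/-!
With `u = w - b` and `v = a - w`, the wedge condition on `w` says `∠(u, d) ≤ α`, and the
projection condition says `⟪v, d⟫ ≥ 0`, i.e. `∠(v, d) ≤ π / 2`. Hence `∠(-u, d) ≥ π - α`, and the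
triangle inequality for angles, `∠(-u, d) ≤ ∠(-u, v) + ∠(v, d)`, gives `∠(-u, v) ≥ π / 2 - α`.
-/

theorem dot2_eq_inner (u v : ℂ) : dot2 u v = inner ℝ u v := by
  simp [dot2, Complex.inner, mul_comm]

namespace InnerProductGeometry

variable {V : Type*} [NormedAddCommGroup V] [InnerProductSpace ℝ V]

open scoped RealInnerProductSpace

theorem angle_le_pi_div_two_of_inner_nonneg {x y : V} (h : 0 ≤ ⟪x, y⟫) :
    angle x y ≤ π / 2 :=
  Real.arccos_le_pi_div_two.2 (div_nonneg h (by positivity))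

theorem angle_le_of_cos_mul_le_inner {x y : V} {α : ℝ} (hx : x ≠ 0) (hy : y ≠ 0)
    (hα0 : 0 ≤ α) (hαπ : α ≤ π) (h : cos α * (‖x‖ * ‖y‖) ≤ ⟪x, y⟫) :
    angle x y ≤ α := by
  have hxy : 0 < ‖x‖ * ‖y‖ := by positivity
  calc angle x y = arccos (⟪x, y⟫ / (‖x‖ * ‖y‖)) := rfl
    _ ≤ arccos (cos α) := Real.arccos_le_arccos ((le_div_iff₀ hxy).2 h)
    _ = α := Real.arccos_cos hα0 hαπ

theorem pi_div_two_sub_le_angle_neg_of_angle_le {u v d : V} {α : ℝ} (hud : angle u d ≤ α)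
    (hvd : 0 ≤ ⟪v, d⟫) : π / 2 - α ≤ angle (-u) v := by
  have hv := angle_le_pi_div_two_of_inner_nonneg hvd
  have htri := angle_le_angle_add_angle (-u) v d
  rw [angle_neg_left] at htri
  linarith

end InnerProductGeometry

open InnerProductGeometry

theorem bisector_nearest_angle_bound_general (α : ℝ) (hα0 : 0 < α) (hα1 : α < π / 2)
    (b d a w : ℂ) (hd : ‖d‖ = 1)
    (hwW : ‖w - b‖ * Real.cos α ≤ dot2 (w - b) d)
    (hproj : dot2 (w - b) d ≤ dot2 (a - b) d) :
    π / 2 - α ≤ InnerProductGeometry.angle (b - w) (a - w) := by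
  simp only [dot2_eq_inner] at hwW hproj
  by_cases hwb : w = b
  · simp [hwb, hα0.le]
  have hwd : angle (w - b) d ≤ α :=
    angle_le_of_cos_mul_le_inner (sub_ne_zero.2 hwb) (norm_pos_iff.1 (hd ▸ one_pos))
      hα0.le (by linarith [pi_pos]) (by rwa [hd, mul_one, mul_comm])
  have had : 0 ≤ inner ℝ (a - w) d := by
    rw [← sub_sub_sub_cancel_right a w b, inner_sub_left]
    linarith
  simpa only [neg_sub] using pi_div_two_sub_le_angle_neg_of_angle_le hwd had

/-- Let `W` be the closed wedge with apex `b`, half-angle `α`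
(total width `2α`) and unit bisector direction `d`, and let `a, w ∈ W` with `w ≠ a`.
If `w` is bisector-closer to `b` than `a` (the projection of `w - b` on `d` is at most
that of `a - b`), then the interior angle of the triangle at `w`, i.e. the angle
between `b - w` and `a - w`, is at least `90° - α`. -/
theorem bisector_nearest_angle_bound (α : ℝ) (hα0 : 0 < α) (hα1 : α < π / 2)
    (b d a w : ℂ) (hd : ‖d‖ = 1)
    (haW : ‖a - b‖ * Real.cos α ≤ dot2 (a - b) d)
    (hwW : ‖w - b‖ * Real.cos α ≤ dot2 (w - b) d)
    (hwa : w ≠ a)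
    (hproj : dot2 (w - b) d ≤ dot2 (a - b) d) :
    π / 2 - α ≤ InnerProductGeometry.angle (b - w) (a - w) :=
  bisector_nearest_angle_bound_general α hα0 hα1 b d a w hd hwW hproj
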